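/- Let 1 ≤ ℓ < k ≤ n/2. For i = 2,…,ℓ one has (θ_i^{k,ℓ} b(0))² ≤ (θ_2^{k,ℓ} b(0))² = ¼ q^{2−2k} ((q^{k−1}−1)/(q^{n−k−1}−1)) ((q^{ℓ−1}−1)/(q^{n−ℓ−1}−1)) ((q^{n−ℓ}−1)/(q^{n−k}−1)) [n−1 choose k−1]_q [n−1 choose ℓ−1]_q, and (θ_i^{k,ℓ} b(0))² < (1/(4q)) [n−1 choose k−1]_q [n−1 choose ℓ−1]_q. -/

import Mathlib

/-- The Gaussian binomial coefficient `[a choose b]_q`, as a real number: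
`∏_{i=0}^{b-1} (q^(a-i)-1)/(q^(b-i)-1)` for `a, b ≥ 0`, and `0` if `a < 0` or `b < 0`. -/
noncomputable def gbinom (q : ℝ) (a b : ℤ) : ℝ :=
  if 0 ≤ a ∧ 0 ≤ b then
    ∏ i ∈ Finset.range b.toNat, (q ^ (a - i) - 1) / (q ^ (b - i) - 1)
  else 0

/-- The eigenvalue
`θ_i^{k,ℓ} = (-1)^i q^{C(i,2) + kℓ - i(k+ℓ)/2} [n-k-i choose ℓ-i] [n-2i choose k-i]^{1/2}
[n-2i choose ℓ-i]^{-1/2}` for `i ≤ k ≤ n - i`, and `0` if `k < i` or `k > n - i`.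
(The half-integer power of `q` is expressed via `√q`.) -/
noncomputable def theta (q : ℝ) (n i k l : ℕ) : ℝ :=
  if i ≤ k ∧ k ≤ n - i then
    (-1) ^ i * (Real.sqrt q) ^ ((i * (i - 1) : ℤ) + 2 * k * l - i * (k + l)) *
      gbinom q ((n : ℤ) - k - i) ((l : ℤ) - i) *
      Real.sqrt (gbinom q ((n : ℤ) - 2 * i) ((k : ℤ) - i)) *
      (Real.sqrt (gbinom q ((n : ℤ) - 2 * i) ((l : ℤ) - i)))⁻¹
  else 0

/-- `b(λ)`, defined by
`q^{kℓ}[n-k choose ℓ] b(λ) = -½ q^ℓ [n-1 choose ℓ]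
- q^{ℓ²}[n-ℓ choose ℓ][n-1 choose ℓ-1]^{1/2}[n-1 choose k-1]^{-1/2} λ`. -/
noncomputable def bF (q : ℝ) (n k l : ℕ) (lam : ℝ) : ℝ :=
  (-(1 / 2) * q ^ l * gbinom q ((n : ℤ) - 1) l -
    q ^ (l ^ 2) * gbinom q ((n : ℤ) - l) l *
      Real.sqrt (gbinom q ((n : ℤ) - 1) ((l : ℤ) - 1)) *
      (Real.sqrt (gbinom q ((n : ℤ) - 1) ((k : ℤ) - 1)))⁻¹ * lam) /
  (q ^ (k * l) * gbinom q ((n : ℤ) - k) l)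

/-! Put `[m]! = ∏_{j=1}^{m} (q^j - 1)`; every Gaussian binomial with `0 ≤ b ≤ a` is
`[a]! / ([b]! [a-b]!)`, so `θ_i²` is a power of `q` times a quotient of such products, and
consecutive values satisfy
`θ_{i+1}² (q^{n-k-i}-1)(q^{n-ℓ-i}-1) q^{k+ℓ} = θ_i² (q^{ℓ-i}-1)(q^{k-i}-1) q^{2i}`.
For `q ≥ 2` the factor on the right is at most `q^{k+ℓ}` and the one on the left at least
`q^{k+ℓ}`, so `i ↦ θ_i²` decreases, while `b(0)` does not depend on `i`. The value at `i = 2` is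
a direct computation; in it the first two quotients are at most `1` and the third is below
`q^{k-ℓ+1}`, so the coefficient of the two Gaussian binomials is below `¼ q^{3-k-ℓ} ≤ ¼ q⁻¹`. -/

section Powers

variable {q : ℝ}

theorem pow_sub_one_pos (hq : 1 < q) {m : ℕ} (hm : m ≠ 0) : 0 < q ^ m - 1 :=
  sub_pos.2 (one_lt_pow₀ hq hm)

theorem one_le_pow_sub_one (hq : 2 ≤ q) {m : ℕ} (hm : m ≠ 0) : 1 ≤ q ^ m - 1 := by
  linarith [le_self_pow₀ (show 1 ≤ q by linarith) hm]

theorem zpow_sub_one_div_nonneg (hq : 1 < q) {a b : ℤ} (ha : 0 ≤ a) (hb : 0 ≤ b) :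
    0 ≤ (q ^ a - 1) / (q ^ b - 1) :=
  div_nonneg (sub_nonneg.2 (one_le_zpow₀ hq.le ha)) (sub_nonneg.2 (one_le_zpow₀ hq.le hb))

theorem zpow_sub_one_div_le_one (hq : 1 < q) {a b : ℤ} (hab : a ≤ b) (hb : 0 ≤ b) :
    (q ^ a - 1) / (q ^ b - 1) ≤ 1 :=
  div_le_one_of_le₀ (sub_le_sub_right (zpow_le_zpow_right₀ hq.le hab) 1)
    (sub_nonneg.2 (one_le_zpow₀ hq.le hb))

theorem zpow_sub_one_div_lt (hq : 2 ≤ q) (a : ℤ) {b : ℤ} (hb : 1 ≤ b) :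
    (q ^ a - 1) / (q ^ b - 1) < q ^ (a - b + 1) := by
  have hq0 : q ≠ 0 := by positivity
  have hqb : 0 < q ^ b - 1 := sub_pos.2 (one_lt_zpow₀ (by linarith) (by omega))
  have hshift : q ^ (a - b + 1) ≤ q ^ a := zpow_le_zpow_right₀ (by linarith) (by omega)
  have hqa : 0 < q ^ a := by positivity
  rw [div_lt_iff₀ hqb, mul_sub, mul_one, ← zpow_add₀ hq0, show a - b + 1 + b = a + 1 by ring,
    zpow_add_one₀ hq0]
  nlinarith

end Powers

noncomputable def qFactorial (q : ℝ) (m : ℕ) : ℝ := ∏ j ∈ Finset.range m, (q ^ (j + 1) - 1)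

section QFactorial

variable {q : ℝ}

theorem qFactorial_zero (q : ℝ) : qFactorial q 0 = 1 := Finset.prod_range_zero _

theorem qFactorial_succ (q : ℝ) (m : ℕ) :
    qFactorial q (m + 1) = qFactorial q m * (q ^ (m + 1) - 1) :=
  Finset.prod_range_succ _ m

theorem qFactorial_eq_of_succ (q : ℝ) {m m' : ℕ} (h : m = m' + 1) :
    qFactorial q m = qFactorial q m' * (q ^ m - 1) := by
  rw [h, qFactorial_succ]

theorem qFactorial_pos (hq : 1 < q) (m : ℕ) : 0 < qFactorial q m :=
  Finset.prod_pos fun j _ => pow_sub_one_pos hq j.succ_ne_zero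

theorem qFactorial_sub_mul_prod (q : ℝ) {a b : ℕ} (hba : b ≤ a) :
    qFactorial q (a - b) * ∏ i ∈ Finset.range b, (q ^ ((a : ℤ) - i) - 1) = qFactorial q a := by
  induction b with
  | zero => simp
  | succ b ih =>
    have hsub : a - b = a - (b + 1) + 1 := by omega
    have hexp : (a : ℤ) - b = ((a - (b + 1) + 1 : ℕ) : ℤ) := by omega
    rw [Finset.prod_range_succ, ← ih (by omega), hsub, qFactorial_succ, hexp, zpow_natCast]
    ring

theorem gbinom_natCast (hq : 1 < q) {a b : ℕ} (hba : b ≤ a) :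
    gbinom q a b = qFactorial q a / (qFactorial q b * qFactorial q (a - b)) := by
  have hnum := qFactorial_sub_mul_prod q hba
  have hden := qFactorial_sub_mul_prod q (le_refl b)
  rw [Nat.sub_self, qFactorial_zero, one_mul] at hden
  have := qFactorial_pos hq (a - b)
  rw [gbinom, if_pos ⟨a.cast_nonneg, b.cast_nonneg⟩, Int.toNat_natCast, Finset.prod_div_distrib,
    ← hnum, ← hden]
  field_simp

theorem gbinom_pos (hq : 1 < q) {a b : ℤ} (hb : 0 ≤ b) (hba : b ≤ a) : 0 < gbinom q a b := by
  lift a to ℕ using hb.trans hba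
  lift b to ℕ using hb
  rw [gbinom_natCast hq (by exact_mod_cast hba)]
  have := qFactorial_pos hq
  exact div_pos (this a) (mul_pos (this b) (this (a - b)))

end QFactorial


section Theta

variable {q : ℝ} {n i k l : ℕ}

theorem theta_sq (hq : 1 < q) (hil : i ≤ l) (hik : i ≤ k) (hkl : k + l ≤ n) :
    theta q n i k l ^ 2 =
      q ^ ((i * (i - 1) : ℤ) + 2 * k * l - i * (k + l)) *
        (qFactorial q (n - k - i) * qFactorial q (n - l - i)) /
        (qFactorial q (l - i) * qFactorial q (k - i) * qFactorial q (n - k - l) ^ 2) := by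
  have hq0 : 0 < q := zero_lt_one.trans hq
  rw [theta, if_pos ⟨hik, by omega⟩,
    show (n : ℤ) - k - i = ((n - k - i : ℕ) : ℤ) by omega,
    show (l : ℤ) - i = ((l - i : ℕ) : ℤ) by omega,
    show (n : ℤ) - 2 * i = ((n - 2 * i : ℕ) : ℤ) by omega,
    show (k : ℤ) - i = ((k - i : ℕ) : ℤ) by omega,
    gbinom_natCast hq (show l - i ≤ n - k - i by omega),
    gbinom_natCast hq (show k - i ≤ n - 2 * i by omega),
    gbinom_natCast hq (show l - i ≤ n - 2 * i by omega),
    show n - k - i - (l - i) = n - k - l by omega,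
    show n - 2 * i - (k - i) = n - k - i by omega,
    show n - 2 * i - (l - i) = n - l - i by omega]
  have hF := qFactorial_pos hq
  have hsign : ((-1 : ℝ) ^ i) ^ 2 = 1 := by rw [← pow_mul, mul_comm, pow_mul, neg_one_sq, one_pow]
  have hsqrt_zpow (m : ℤ) : (√q ^ m) ^ 2 = q ^ m := by
    rw [← zpow_natCast, ← zpow_mul, mul_comm, zpow_mul, zpow_natCast, Real.sq_sqrt hq0.le]
  simp only [mul_pow, inv_pow, hsqrt_zpow, hsign]
  rw [Real.sq_sqrt (div_pos (hF _) (mul_pos (hF _) (hF _))).le,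
    Real.sq_sqrt (div_pos (hF _) (mul_pos (hF _) (hF _))).le]
  have := hF (n - 2 * i)
  field_simp

theorem theta_succ_sq_mul (hq : 1 < q) (hil : i < l) (hik : i < k) (hkl : k + l ≤ n) :
    theta q n (i + 1) k l ^ 2 * ((q ^ (n - k - i) - 1) * (q ^ (n - l - i) - 1)) * q ^ (k + l) =
      theta q n i k l ^ 2 * ((q ^ (l - i) - 1) * (q ^ (k - i) - 1)) * q ^ (2 * i) := by
  have hq0 : q ≠ 0 := (zero_lt_one.trans hq).ne'
  have hF (m : ℕ) := (qFactorial_pos hq m).ne'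
  have hexp : q ^ (((i + 1 : ℕ) * ((i + 1 : ℕ) - 1) : ℤ) + 2 * k * l - (i + 1 : ℕ) * (k + l)) *
      q ^ (k + l) = q ^ ((i * (i - 1) : ℤ) + 2 * k * l - i * (k + l)) * q ^ (2 * i) := by
    rw [← zpow_natCast, ← zpow_natCast, ← zpow_add₀ hq0, ← zpow_add₀ hq0]
    push_cast
    ring_nf
  rw [theta_sq hq hil.le hik.le hkl, theta_sq hq hil hik hkl,
    show n - k - i = n - k - (i + 1) + 1 by omega, show n - l - i = n - l - (i + 1) + 1 by omega,
    show l - i = l - (i + 1) + 1 by omega, show k - i = k - (i + 1) + 1 by omega]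
  simp only [qFactorial_succ]
  have hli := (pow_sub_one_pos hq (l - (i + 1)).succ_ne_zero).ne'
  have hki := (pow_sub_one_pos hq (k - (i + 1)).succ_ne_zero).ne'
  field_simp
  simp only [Nat.succ_eq_add_one]
  linear_combination qFactorial q (n - k - (i + 1)) * qFactorial q (n - l - (i + 1)) *
    (q ^ (n - k - (i + 1) + 1) - 1) * (q ^ (n - l - (i + 1) + 1) - 1) /
    (qFactorial q (l - (i + 1)) * qFactorial q (k - (i + 1)) * qFactorial q (n - k - l) ^ 2) * hexp

theorem theta_succ_sq_le (hq : 2 ≤ q) (hil : i < l) (hik : i < k) (hkl : k + l ≤ n) :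
    theta q n (i + 1) k l ^ 2 ≤ theta q n i k l ^ 2 := by
  have hq1 : 1 < q := by linarith
  have hq0 : 0 < q := by linarith
  have hden : q ^ (k + l) ≤ (q ^ (n - k - i) - 1) * (q ^ (n - l - i) - 1) * q ^ (k + l) :=
    le_mul_of_one_le_left (by positivity)
      (one_le_mul_of_one_le_of_one_le (one_le_pow_sub_one hq (by omega))
        (one_le_pow_sub_one hq (by omega)))
  have hnum : (q ^ (l - i) - 1) * (q ^ (k - i) - 1) * q ^ (2 * i) ≤ q ^ (k + l) := by
    calc (q ^ (l - i) - 1) * (q ^ (k - i) - 1) * q ^ (2 * i)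
        ≤ q ^ (l - i) * q ^ (k - i) * q ^ (2 * i) := by
          have := pow_sub_one_pos hq1 (show l - i ≠ 0 by omega)
          have := pow_sub_one_pos hq1 (show k - i ≠ 0 by omega)
          gcongr <;> linarith
      _ = q ^ (k + l) := by rw [← pow_add, ← pow_add]; congr 1; omega
  have hstep := theta_succ_sq_mul hq1 hil hik hkl
  have h0 := sq_nonneg (theta q n (i + 1) k l)
  have h1 := sq_nonneg (theta q n i k l)
  refine le_of_mul_le_mul_right ?_ (pow_pos hq0 (k + l))
  nlinarith [mul_le_mul_of_nonneg_left hden h0, mul_le_mul_of_nonneg_left hnum h1]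

theorem theta_sq_le_theta_sq_of_le (hq : 2 ≤ q) {j : ℕ} (hji : j ≤ i) (hil : i ≤ l) (hik : i ≤ k)
    (hkl : k + l ≤ n) : theta q n i k l ^ 2 ≤ theta q n j k l ^ 2 := by
  induction i, hji using Nat.le_induction with
  | base => exact le_rfl
  | succ m _ ih =>
    exact (theta_succ_sq_le hq hil hik hkl).trans (ih (by omega) (by omega))

theorem theta_two_mul_bF_zero_sq (hq : 1 < q) (hl : 2 ≤ l) (hk : 2 ≤ k) (hkl : k + l ≤ n) :
    (theta q n 2 k l * bF q n k l 0) ^ 2 =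
      1 / 4 * q ^ ((2 : ℤ) - 2 * k) *
        ((q ^ ((k : ℤ) - 1) - 1) / (q ^ ((n : ℤ) - k - 1) - 1)) *
        ((q ^ ((l : ℤ) - 1) - 1) / (q ^ ((n : ℤ) - l - 1) - 1)) *
        ((q ^ ((n : ℤ) - l) - 1) / (q ^ ((n : ℤ) - k) - 1)) *
        gbinom q ((n : ℤ) - 1) ((k : ℤ) - 1) * gbinom q ((n : ℤ) - 1) ((l : ℤ) - 1) := by
  have hq0 : q ≠ 0 := (zero_lt_one.trans hq).ne'
  have hF (m : ℕ) := (qFactorial_pos hq m).ne'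
  have hpow : q ^ (((2 : ℕ) * ((2 : ℕ) - 1) : ℤ) + 2 * k * l - (2 : ℕ) * (k + l)) =
      (q ^ (k * l)) ^ 2 / ((q ^ l) ^ 2 * q ^ (2 * k - 2)) := by
    rw [eq_div_iff (by positivity), ← pow_mul, ← pow_mul, ← pow_add, ← zpow_natCast, ← zpow_natCast, ← zpow_add₀ hq0]
    congr 1
    push_cast [show 2 ≤ 2 * k by omega]
    ring
  rw [mul_pow, theta_sq hq (by omega) (by omega) hkl, hpow, bF]
  rw [show (2 : ℤ) - 2 * k = -((2 * k - 2 : ℕ) : ℤ) by omega, zpow_neg,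
    show (n : ℤ) - k - 1 = ((n - k - 1 : ℕ) : ℤ) by omega,
    show (n : ℤ) - l - 1 = ((n - l - 1 : ℕ) : ℤ) by omega,
    show (k : ℤ) - 1 = ((k - 1 : ℕ) : ℤ) by omega,
    show (l : ℤ) - 1 = ((l - 1 : ℕ) : ℤ) by omega,
    show (n : ℤ) - l = ((n - l : ℕ) : ℤ) by omega,
    show (n : ℤ) - k = ((n - k : ℕ) : ℤ) by omega,
    show (n : ℤ) - 1 = ((n - 1 : ℕ) : ℤ) by omega]
  simp only [zpow_natCast, mul_zero, sub_zero]
  rw [gbinom_natCast hq (show k - 1 ≤ n - 1 by omega), gbinom_natCast hq (show l - 1 ≤ n - 1 by omega),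
    gbinom_natCast hq (show l ≤ n - 1 by omega), gbinom_natCast hq (show l ≤ n - k by omega),
    show n - 1 - (k - 1) = n - k by omega, show n - 1 - (l - 1) = n - l by omega,
    show n - 1 - l = n - l - 1 by omega,
    qFactorial_eq_of_succ q (show k - 1 = k - 2 + 1 by omega),
    qFactorial_eq_of_succ q (show l - 1 = l - 2 + 1 by omega),
    qFactorial_eq_of_succ q (show n - k = n - k - 1 + 1 by omega),
    qFactorial_eq_of_succ q (show n - l = n - l - 1 + 1 by omega),
    qFactorial_eq_of_succ q (show n - k - 1 = n - k - 2 + 1 by omega),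
    qFactorial_eq_of_succ q (show n - l - 1 = n - l - 2 + 1 by omega)]
  have h1 := (pow_sub_one_pos hq (show k - 1 ≠ 0 by omega)).ne'
  have h2 := (pow_sub_one_pos hq (show l - 1 ≠ 0 by omega)).ne'
  have h3 := (pow_sub_one_pos hq (show n - k ≠ 0 by omega)).ne'
  have h4 := (pow_sub_one_pos hq (show n - l ≠ 0 by omega)).ne'
  have h5 := (pow_sub_one_pos hq (show n - k - 1 ≠ 0 by omega)).ne'
  have h6 := (pow_sub_one_pos hq (show n - l - 1 ≠ 0 by omega)).ne'
  field_simp [hF]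
  ring

theorem theta_two_mul_bF_zero_sq_lt (hq : 2 ≤ q) (hl : 2 ≤ l) (hk : 2 ≤ k)
    (hkn : 2 * k ≤ n) (hln : 2 * l ≤ n) :
    (theta q n 2 k l * bF q n k l 0) ^ 2 <
      1 / (4 * q) * gbinom q ((n : ℤ) - 1) ((k : ℤ) - 1) * gbinom q ((n : ℤ) - 1) ((l : ℤ) - 1) := by
  have hq1 : 1 < q := by linarith
  rw [theta_two_mul_bF_zero_sq hq1 hl hk (by omega)]
  have hGk := gbinom_pos hq1 (show (0 : ℤ) ≤ k - 1 by omega) (show (k : ℤ) - 1 ≤ n - 1 by omega)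
  have hGl := gbinom_pos hq1 (show (0 : ℤ) ≤ l - 1 by omega) (show (l : ℤ) - 1 ≤ n - 1 by omega)
  set rk := (q ^ ((k : ℤ) - 1) - 1) / (q ^ ((n : ℤ) - k - 1) - 1)
  set rl := (q ^ ((l : ℤ) - 1) - 1) / (q ^ ((n : ℤ) - l - 1) - 1)
  set r := (q ^ ((n : ℤ) - l) - 1) / (q ^ ((n : ℤ) - k) - 1)
  have hrk : rk ≤ 1 := zpow_sub_one_div_le_one hq1 (by omega) (by omega)
  have hrl : rl ≤ 1 := zpow_sub_one_div_le_one hq1 (by omega) (by omega)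
  have hrl0 : 0 ≤ rl := zpow_sub_one_div_nonneg hq1 (by omega) (by omega)
  have hr0 : 0 ≤ r := zpow_sub_one_div_nonneg hq1 (by omega) (by omega)
  have hr : r < q ^ ((n : ℤ) - l - (n - k) + 1) := zpow_sub_one_div_lt hq _ (by omega)
  have hfactor : q ^ ((2 : ℤ) - 2 * k) * rk * rl * r < q⁻¹ :=
    calc q ^ ((2 : ℤ) - 2 * k) * rk * rl * r = q ^ ((2 : ℤ) - 2 * k) * r * (rk * rl) := by ring
      _ ≤ q ^ ((2 : ℤ) - 2 * k) * r :=
        mul_le_of_le_one_right (by positivity) (mul_le_one₀ hrk hrl0 hrl)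
      _ < q ^ ((2 : ℤ) - 2 * k) * q ^ ((n : ℤ) - l - (n - k) + 1) := by gcongr
      _ = q ^ ((3 : ℤ) - k - l) := by rw [← zpow_add₀ (by positivity)]; ring_nf
      _ ≤ q ^ (-1 : ℤ) := zpow_le_zpow_right₀ hq1.le (by omega)
      _ = q⁻¹ := zpow_neg_one q
  calc 1 / 4 * q ^ ((2 : ℤ) - 2 * k) * rk * rl * r * gbinom q ((n : ℤ) - 1) ((k : ℤ) - 1) *
        gbinom q ((n : ℤ) - 1) ((l : ℤ) - 1)
      = 1 / 4 * (q ^ ((2 : ℤ) - 2 * k) * rk * rl * r) * gbinom q ((n : ℤ) - 1) ((k : ℤ) - 1) *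
        gbinom q ((n : ℤ) - 1) ((l : ℤ) - 1) := by ring
    _ < 1 / 4 * q⁻¹ * gbinom q ((n : ℤ) - 1) ((k : ℤ) - 1) * gbinom q ((n : ℤ) - 1) ((l : ℤ) - 1) := by
      gcongr
    _ = _ := by ring

end Theta

theorem theta_mul_b_zero_sq_general
    (q n k l : ℕ) (hq : IsPrimePow q)
    (hlk : l < k) (hkn : 2 * k ≤ n)
    (i : ℕ) (hi2 : 2 ≤ i) (hil : i ≤ l) :
    (theta (q : ℝ) n i k l * bF (q : ℝ) n k l 0) ^ 2 ≤
        (theta (q : ℝ) n 2 k l * bF (q : ℝ) n k l 0) ^ 2 ∧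
    (theta (q : ℝ) n 2 k l * bF (q : ℝ) n k l 0) ^ 2 =
      (1 / 4) * (q : ℝ) ^ ((2 : ℤ) - 2 * k) *
        (((q : ℝ) ^ ((k : ℤ) - 1) - 1) / ((q : ℝ) ^ ((n : ℤ) - k - 1) - 1)) *
        (((q : ℝ) ^ ((l : ℤ) - 1) - 1) / ((q : ℝ) ^ ((n : ℤ) - l - 1) - 1)) *
        (((q : ℝ) ^ ((n : ℤ) - l) - 1) / ((q : ℝ) ^ ((n : ℤ) - k) - 1)) *
        gbinom (q : ℝ) ((n : ℤ) - 1) ((k : ℤ) - 1) *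
        gbinom (q : ℝ) ((n : ℤ) - 1) ((l : ℤ) - 1) ∧
    (theta (q : ℝ) n i k l * bF (q : ℝ) n k l 0) ^ 2 <
      (1 / (4 * q)) * gbinom (q : ℝ) ((n : ℤ) - 1) ((k : ℤ) - 1) *
        gbinom (q : ℝ) ((n : ℤ) - 1) ((l : ℤ) - 1) := by
  have hq2 : (2 : ℝ) ≤ q := by exact_mod_cast hq.two_le
  have hmono : (theta (q : ℝ) n i k l * bF (q : ℝ) n k l 0) ^ 2 ≤
      (theta (q : ℝ) n 2 k l * bF (q : ℝ) n k l 0) ^ 2 := by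
    rw [mul_pow, mul_pow]
    exact mul_le_mul_of_nonneg_right
      (theta_sq_le_theta_sq_of_le hq2 hi2 hil (by omega) (by omega)) (sq_nonneg _)
  exact ⟨hmono, theta_two_mul_bF_zero_sq (by linarith) (by omega) (by omega) (by omega),
    hmono.trans_lt (theta_two_mul_bF_zero_sq_lt hq2 (by omega) (by omega) hkn (by omega))⟩

/-- **Evaluation of `(θ_i^{k,ℓ} b(0))²`.** For `1 ≤ ℓ < k ≤ n/2` and `2 ≤ i ≤ ℓ`:
`(θ_i^{k,ℓ} b(0))² ≤ (θ_2^{k,ℓ} b(0))²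
 = ¼ q^{2-2k} ((q^{k-1}-1)/(q^{n-k-1}-1)) ((q^{ℓ-1}-1)/(q^{n-ℓ-1}-1)) ((q^{n-ℓ}-1)/(q^{n-k}-1))
   [n-1 choose k-1][n-1 choose ℓ-1]`,
and `(θ_i^{k,ℓ} b(0))² < (1/4q) [n-1 choose k-1][n-1 choose ℓ-1]`. -/
theorem theta_mul_b_zero_sq
    (q n k l : ℕ) (hq : IsPrimePow q)
    (hl1 : 1 ≤ l) (hlk : l < k) (hkn : 2 * k ≤ n)
    (i : ℕ) (hi2 : 2 ≤ i) (hil : i ≤ l) :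
    (theta (q : ℝ) n i k l * bF (q : ℝ) n k l 0) ^ 2 ≤
        (theta (q : ℝ) n 2 k l * bF (q : ℝ) n k l 0) ^ 2 ∧
    (theta (q : ℝ) n 2 k l * bF (q : ℝ) n k l 0) ^ 2 =
      (1 / 4) * (q : ℝ) ^ ((2 : ℤ) - 2 * k) *
        (((q : ℝ) ^ ((k : ℤ) - 1) - 1) / ((q : ℝ) ^ ((n : ℤ) - k - 1) - 1)) *
        (((q : ℝ) ^ ((l : ℤ) - 1) - 1) / ((q : ℝ) ^ ((n : ℤ) - l - 1) - 1)) *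
        (((q : ℝ) ^ ((n : ℤ) - l) - 1) / ((q : ℝ) ^ ((n : ℤ) - k) - 1)) *
        gbinom (q : ℝ) ((n : ℤ) - 1) ((k : ℤ) - 1) *
        gbinom (q : ℝ) ((n : ℤ) - 1) ((l : ℤ) - 1) ∧
    (theta (q : ℝ) n i k l * bF (q : ℝ) n k l 0) ^ 2 <
      (1 / (4 * q)) * gbinom (q : ℝ) ((n : ℤ) - 1) ((k : ℤ) - 1) *
        gbinom (q : ℝ) ((n : ℤ) - 1) ((l : ℤ) - 1) :=
  theta_mul_b_zero_sq_general q n k l hq hlk hkn i hi2 hil
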